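/- The canonical frame of L = LIK X is downward confluent: for all prime theories Γ, Δ, Λ, if Γ ⊆ Δ and R_L Δ Λ, then there exists a prime theory Θ with R_L Γ Θ and Θ ⊆ Λ. -/

import Mathlib

/-- Formulas of intuitionistic modal logic. -/
inductive Formula : Type where
  | atom : ℕ → Formula
  | top  : Formula
  | bot  : Formula
  | and  : Formula → Formula → Formula
  | or   : Formula → Formula → Formula
  | imp  : Formula → Formula → Formula
  | box  : Formula → Formula
  | dia  : Formula → Formula
deriving DecidableEq


/-- The three optional extension axioms D, T, 4. -/
inductive ModAx : Type where
  | D : ModAx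
  | T : ModAx
  | Four : ModAx
deriving DecidableEq

/-- The Hilbert system LIK X: a complete Hilbert base for intuitionistic
propositional logic (as axiom schemata, hence all substitution instances of
IPL theorems are derivable), the modal axioms K□, K◇, N, DP, RV, the
extension axioms D, T, 4 according to membership in `X`, with rules
modus ponens and necessitation. -/
inductive LIK (X : Set ModAx) : Formula → Prop where
  | a1 (A B : Formula) : LIK X (A.imp (B.imp A))
  | a2 (A B C : Formula) : LIK X ((A.imp (B.imp C)).imp ((A.imp B).imp (A.imp C)))
  | a3 (A B : Formula) : LIK X ((A.and B).imp A)
  | a4 (A B : Formula) : LIK X ((A.and B).imp B)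
  | a5 (A B : Formula) : LIK X (A.imp (B.imp (A.and B)))
  | a6 (A B : Formula) : LIK X (A.imp (A.or B))
  | a7 (A B : Formula) : LIK X (B.imp (A.or B))
  | a8 (A B C : Formula) : LIK X ((A.imp C).imp ((B.imp C).imp ((A.or B).imp C)))
  | exfalso (A : Formula) : LIK X (Formula.bot.imp A)
  | truth : LIK X Formula.top
  | kbox (A B : Formula) :
      LIK X ((Formula.box (A.imp B)).imp ((Formula.box A).imp (Formula.box B)))
  | kdia (A B : Formula) :
      LIK X ((Formula.box (A.imp B)).imp ((Formula.dia A).imp (Formula.dia B)))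
  | nax : LIK X ((Formula.dia Formula.bot).imp Formula.bot)
  | dp (A B : Formula) :
      LIK X ((Formula.dia (A.or B)).imp ((Formula.dia A).or (Formula.dia B)))
  | rv (A B : Formula) :
      LIK X ((Formula.box (A.or B)).imp ((Formula.dia A).or (Formula.box B)))
  | dax : ModAx.D ∈ X → LIK X (Formula.dia Formula.top)
  | tax (A : Formula) : ModAx.T ∈ X →
      LIK X (((Formula.box A).imp A).and (A.imp (Formula.dia A)))
  | fourax (A : Formula) : ModAx.Four ∈ X →
      LIK X (((Formula.box A).imp (Formula.box (Formula.box A))).and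
        ((Formula.dia (Formula.dia A)).imp (Formula.dia A)))
  | mp (A B : Formula) : LIK X (A.imp B) → LIK X A → LIK X B
  | nec (A : Formula) : LIK X A → LIK X (Formula.box A)

/-- A theory for L = LIK X: contains all L-derivable formulas and is closed
under modus ponens. -/
def IsTheory (X : Set ModAx) (Γ : Set Formula) : Prop :=
  (∀ A, LIK X A → A ∈ Γ) ∧ ∀ A B, Formula.imp A B ∈ Γ → A ∈ Γ → B ∈ Γ

/-- A prime theory: a proper theory (⊥ ∉ Γ) deciding disjunctions. -/
def IsPrime (X : Set ModAx) (Γ : Set Formula) : Prop :=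
  IsTheory X Γ ∧ Formula.bot ∉ Γ ∧ ∀ A B, Formula.or A B ∈ Γ → A ∈ Γ ∨ B ∈ Γ

/-- The canonical accessibility relation:
`R_L Γ Δ` iff `□Γ ⊆ Δ` and `◇Δ ⊆ Γ`. -/
def CanR (Γ Δ : Set Formula) : Prop :=
  (∀ A, Formula.box A ∈ Γ → A ∈ Δ) ∧ (∀ A, A ∈ Δ → Formula.dia A ∈ Γ)


/-! `Θ` is a prime theory containing `{A | □A ∈ Γ}` and avoiding the ideal generated by
`{E | ◇E ∉ Γ}` and the complement of `Λ`; avoiding that ideal is exactly `Θ ⊆ Λ` and `◇Θ ⊆ Γ`.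
Both generating sets are closed under `∨` (by DP, resp. primeness of `Λ`), so the ideal consists
of the formulas implying some `E ∨ G` with `◇E ∉ Γ` and `G ∉ Λ`, and the prime filter theorem
provides `Θ` once `{A | □A ∈ Γ}` misses the ideal. That is where RV enters: from `□(E ∨ G) ∈ Γ`
and `◇E ∉ Γ` we get `□G ∈ Γ ⊆ Δ`, hence `G ∈ Λ`. -/

variable {X : Set ModAx}

namespace LIK

theorem imp_self (A : Formula) : LIK X (A.imp A) :=
  mp _ _ (mp _ _ (a2 A (A.imp A) A) (a1 A (A.imp A))) (a1 A A)

theorem imp_imp_imp {A B C : Formula} (h : LIK X (B.imp C)) :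
    LIK X ((A.imp B).imp (A.imp C)) :=
  mp _ _ (a2 A B C) (mp _ _ (a1 (B.imp C) A) h)

theorem imp_trans {A B C : Formula} (h₁ : LIK X (A.imp B)) (h₂ : LIK X (B.imp C)) :
    LIK X (A.imp C) :=
  mp _ _ (imp_imp_imp h₂) h₁

theorem or_elim {A B C : Formula} (h₁ : LIK X (A.imp C)) (h₂ : LIK X (B.imp C)) :
    LIK X ((A.or B).imp C) :=
  mp _ _ (mp _ _ (a8 A B C) h₁) h₂

theorem or_mono {A B C D : Formula} (h₁ : LIK X (A.imp C)) (h₂ : LIK X (B.imp D)) :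
    LIK X ((A.or B).imp (C.or D)) :=
  or_elim (imp_trans h₁ (a6 C D)) (imp_trans h₂ (a7 C D))

end LIK

namespace IsTheory

variable {Γ : Set Formula}

theorem mem_of_derivable (hΓ : IsTheory X Γ) {A : Formula} (h : LIK X A) : A ∈ Γ :=
  hΓ.1 A h

theorem mp (hΓ : IsTheory X Γ) {A B : Formula} (hAB : A.imp B ∈ Γ) (hA : A ∈ Γ) : B ∈ Γ :=
  hΓ.2 A B hAB hA

theorem mem_of_derivable_imp (hΓ : IsTheory X Γ) {A B : Formula} (h : LIK X (A.imp B))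
    (hA : A ∈ Γ) : B ∈ Γ :=
  hΓ.mp (hΓ.mem_of_derivable h) hA

theorem mem_of_derivable_imp₂ (hΓ : IsTheory X Γ) {A B C : Formula}
    (h : LIK X (A.imp (B.imp C))) (hA : A ∈ Γ) (hB : B ∈ Γ) : C ∈ Γ :=
  hΓ.mp (hΓ.mem_of_derivable_imp h hA) hB

theorem or_mem_of_imp_mem (hΓ : IsTheory X Γ) {A B C D : Formula} (hAB : A.or B ∈ Γ)
    (hAC : A.imp C ∈ Γ) (hBD : B.imp D ∈ Γ) : C.or D ∈ Γ :=
  have hAC' := hΓ.mem_of_derivable_imp (LIK.imp_imp_imp (LIK.a6 C D)) hAC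
  have hBD' := hΓ.mem_of_derivable_imp (LIK.imp_imp_imp (LIK.a7 C D)) hBD
  hΓ.mp (hΓ.mem_of_derivable_imp₂ (LIK.a8 A B (C.or D)) hAC' hBD') hAB

theorem sUnion {c : Set (Set Formula)} (hc : ∀ T ∈ c, IsTheory X T)
    (hchain : IsChain (· ⊆ ·) c) (hne : c.Nonempty) : IsTheory X (⋃₀ c) := by
  obtain ⟨T₀, hT₀⟩ := hne
  refine ⟨fun A hA => ⟨T₀, hT₀, (hc T₀ hT₀).mem_of_derivable hA⟩, ?_⟩
  rintro A B ⟨T₁, hT₁, hAB⟩ ⟨T₂, hT₂, hA⟩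
  rcases hchain.total hT₁ hT₂ with h | h
  · exact ⟨T₂, hT₂, (hc T₂ hT₂).mp (h hAB) hA⟩
  · exact ⟨T₁, hT₁, (hc T₁ hT₁).mp hAB (h hA)⟩

end IsTheory

/-- The theory `Γ + A`. -/
def adjoin (Γ : Set Formula) (A : Formula) : Set Formula :=
  {C | A.imp C ∈ Γ}

section adjoin

variable {Γ : Set Formula}

theorem isTheory_adjoin (hΓ : IsTheory X Γ) (A : Formula) : IsTheory X (adjoin Γ A) :=
  ⟨fun C hC => hΓ.mem_of_derivable (LIK.mp _ _ (LIK.a1 C A) hC),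
    fun C D hCD hC => hΓ.mem_of_derivable_imp₂ (LIK.a2 A C D) hCD hC⟩

theorem IsTheory.subset_adjoin (hΓ : IsTheory X Γ) (A : Formula) : Γ ⊆ adjoin Γ A :=
  fun C hC => hΓ.mem_of_derivable_imp (LIK.a1 C A) hC

theorem IsTheory.mem_adjoin_self (hΓ : IsTheory X Γ) (A : Formula) : A ∈ adjoin Γ A :=
  hΓ.mem_of_derivable (LIK.imp_self A)

end adjoin

def IsOrClosed (I : Set Formula) : Prop :=
  ∀ A B, A ∈ I → B ∈ I → A.or B ∈ I

theorem isOrClosed_compl_of_isPrime {Γ : Set Formula} (hΓ : IsPrime X Γ) : IsOrClosed Γᶜ :=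
  fun A B hA hB hAB => (hΓ.2.2 A B hAB).elim hA hB

/-- Lindenbaum's lemma in prime-filter form. -/
theorem exists_isPrime_of_disjoint {T I : Set Formula} (hT : IsTheory X T) (hI : IsOrClosed I)
    (hbot : Formula.bot ∈ I) (hTI : Disjoint T I) :
    ∃ Θ, IsPrime X Θ ∧ T ⊆ Θ ∧ Disjoint Θ I := by
  obtain ⟨Θ, hTΘ, hmax⟩ := zorn_subset_nonempty {Θ | IsTheory X Θ ∧ Disjoint Θ I}
    (fun c hc hchain hne => ⟨⋃₀ c,
      ⟨IsTheory.sUnion (fun T hT => (hc hT).1) hchain hne,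
        Set.disjoint_sUnion_left.2 fun T hT => (hc hT).2⟩,
      fun _ => Set.subset_sUnion_of_mem⟩) T ⟨hT, hTI⟩
  obtain ⟨hΘ, hΘI⟩ : IsTheory X Θ ∧ Disjoint Θ I := hmax.prop
  have adjoin_meets : ∀ A ∉ Θ, ∃ C ∈ I, A.imp C ∈ Θ := by
    intro A hA
    by_contra! h
    have hmem : adjoin Θ A ∈ {Θ | IsTheory X Θ ∧ Disjoint Θ I} :=
      ⟨isTheory_adjoin hΘ A, Set.disjoint_left.2 fun C hC hCI => h C hCI hC⟩
    exact hA (hmax.le_of_ge hmem (hΘ.subset_adjoin A) (hΘ.mem_adjoin_self A))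
  refine ⟨Θ, ⟨hΘ, fun h => Set.disjoint_left.1 hΘI h hbot, ?_⟩, hTΘ, hΘI⟩
  intro A B hAB
  by_contra! ⟨hA, hB⟩
  obtain ⟨C, hCI, hAC⟩ := adjoin_meets A hA
  obtain ⟨D, hDI, hBD⟩ := adjoin_meets B hB
  exact Set.disjoint_left.1 hΘI (hΘ.or_mem_of_imp_mem hAB hAC hBD) (hI C D hCI hDI)

/-- The ideal generated by `I ∪ J` when `I` and `J` are ideals of the Lindenbaum algebra. -/
def idealSup (X : Set ModAx) (I J : Set Formula) : Set Formula :=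
  {D | ∃ E ∈ I, ∃ G ∈ J, LIK X (D.imp (E.or G))}

section idealSup

variable {I J : Set Formula}

theorem IsOrClosed.idealSup (hI : IsOrClosed I) (hJ : IsOrClosed J) :
    IsOrClosed (idealSup X I J) := by
  rintro D₁ D₂ ⟨E₁, hE₁, G₁, hG₁, h₁⟩ ⟨E₂, hE₂, G₂, hG₂, h₂⟩
  refine ⟨E₁.or E₂, hI E₁ E₂ hE₁ hE₂, G₁.or G₂, hJ G₁ G₂ hG₁ hG₂, LIK.or_elim ?_ ?_⟩
  · exact LIK.imp_trans h₁ (LIK.or_mono (LIK.a6 E₁ E₂) (LIK.a6 G₁ G₂))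
  · exact LIK.imp_trans h₂ (LIK.or_mono (LIK.a7 E₁ E₂) (LIK.a7 G₁ G₂))

theorem bot_mem_idealSup (hI : Formula.bot ∈ I) (hJ : Formula.bot ∈ J) :
    Formula.bot ∈ idealSup X I J :=
  ⟨_, hI, _, hJ, LIK.a6 _ _⟩

theorem disjoint_left_of_disjoint_idealSup {Θ : Set Formula} (hJ : Formula.bot ∈ J)
    (h : Disjoint Θ (idealSup X I J)) : Disjoint Θ I :=
  Set.disjoint_left.2 fun A hA hAI => Set.disjoint_left.1 h hA ⟨A, hAI, _, hJ, LIK.a6 _ _⟩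

theorem disjoint_right_of_disjoint_idealSup {Θ : Set Formula} (hI : Formula.bot ∈ I)
    (h : Disjoint Θ (idealSup X I J)) : Disjoint Θ J :=
  Set.disjoint_left.2 fun A hA hAJ => Set.disjoint_left.1 h hA ⟨_, hI, A, hAJ, LIK.a7 _ _⟩

end idealSup

def boxInv (Γ : Set Formula) : Set Formula :=
  {A | Formula.box A ∈ Γ}

def diaInv (Γ : Set Formula) : Set Formula :=
  {A | Formula.dia A ∈ Γ}

section inverseImages

variable {Γ : Set Formula}

theorem isTheory_boxInv (hΓ : IsTheory X Γ) : IsTheory X (boxInv Γ) :=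
  ⟨fun A hA => hΓ.mem_of_derivable (LIK.nec A hA),
    fun A B hAB hA => hΓ.mem_of_derivable_imp₂ (LIK.kbox A B) hAB hA⟩

theorem IsTheory.box_mem_of_derivable_imp (hΓ : IsTheory X Γ) {A B : Formula}
    (h : LIK X (A.imp B)) (hA : Formula.box A ∈ Γ) : Formula.box B ∈ Γ :=
  hΓ.mem_of_derivable_imp₂ (LIK.kbox A B) (hΓ.mem_of_derivable (LIK.nec _ h)) hA

theorem isOrClosed_compl_diaInv (hΓ : IsPrime X Γ) : IsOrClosed (diaInv Γ)ᶜ :=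
  fun A B hA hB hAB => (hΓ.2.2 _ _ (hΓ.1.mem_of_derivable_imp (LIK.dp A B) hAB)).elim hA hB

theorem bot_notMem_diaInv (hΓ : IsPrime X Γ) : Formula.bot ∉ diaInv Γ :=
  fun h => hΓ.2.1 (hΓ.1.mem_of_derivable_imp LIK.nax h)

end inverseImages

theorem disjoint_boxInv_idealSup {Γ Δ Λ : Set Formula} (hΓ : IsPrime X Γ) (hsub : Γ ⊆ Δ)
    (hR : CanR Δ Λ) : Disjoint (boxInv Γ) (idealSup X (diaInv Γ)ᶜ Λᶜ) := by
  refine Set.disjoint_left.2 ?_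
  rintro D hD ⟨E, hE, G, hG, hDEG⟩
  have hEG : Formula.box (E.or G) ∈ Γ := hΓ.1.box_mem_of_derivable_imp hDEG hD
  rcases hΓ.2.2 _ _ (hΓ.1.mem_of_derivable_imp (LIK.rv E G) hEG) with hE' | hG'
  · exact hE hE'
  · exact hG (hR.1 G (hsub hG'))

theorem canonical_downward_confluent_general (X : Set ModAx)
    (Γ Δ Λ : Set Formula)
    (hΓ : IsPrime X Γ) (hΛ : IsPrime X Λ)
    (hsub : Γ ⊆ Δ) (hR : CanR Δ Λ) :
    ∃ Θ : Set Formula, IsPrime X Θ ∧ CanR Γ Θ ∧ Θ ⊆ Λ := by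
  have hbotΓ : Formula.bot ∈ (diaInv Γ)ᶜ := bot_notMem_diaInv hΓ
  have hbotΛ : Formula.bot ∈ Λᶜ := hΛ.2.1
  obtain ⟨Θ, hΘ, hboxΘ, hΘI⟩ := exists_isPrime_of_disjoint (isTheory_boxInv hΓ.1)
    ((isOrClosed_compl_diaInv hΓ).idealSup (isOrClosed_compl_of_isPrime hΛ))
    (bot_mem_idealSup hbotΓ hbotΛ) (disjoint_boxInv_idealSup hΓ hsub hR)
  have hΘdia : Θ ⊆ diaInv Γ :=
    Set.disjoint_compl_right_iff_subset.1 (disjoint_left_of_disjoint_idealSup hbotΛ hΘI)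
  exact ⟨Θ, hΘ, ⟨hboxΘ, hΘdia⟩,
    Set.disjoint_compl_right_iff_subset.1 (disjoint_right_of_disjoint_idealSup hbotΓ hΘI)⟩

/-- The canonical frame of L = LIK X is downward confluent. -/
theorem canonical_downward_confluent (X : Set ModAx)
    (Γ Δ Λ : Set Formula)
    (hΓ : IsPrime X Γ) (hΔ : IsPrime X Δ) (hΛ : IsPrime X Λ)
    (hsub : Γ ⊆ Δ) (hR : CanR Δ Λ) :
    ∃ Θ : Set Formula, IsPrime X Θ ∧ CanR Γ Θ ∧ Θ ⊆ Λ :=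
  canonical_downward_confluent_general X Γ Δ Λ hΓ hΛ hsub hR
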